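/- Let V ∈ ℝ^{N×k} have full column rank, let Z ∈ ℝ^{N×r} be such that the null space of Zᵀ equals the column space of V, and let m ∈ ℝ^N satisfy mᵀ V = e₁ᵀ (the first standard basis row vector in ℝ^k). Suppose there exists w ∈ ℝ^N with w > 0 entrywise and wᵀ V = e₁ᵀ. Then there exists y ∈ ℝ^r with m + Z y ≥ 0 entrywise. -/

import Mathlib

open Matrix

theorem stmt4 {N k r : ℕ}
    (V : Matrix (Fin N) (Fin (k + 1)) ℝ)
    (Z : Matrix (Fin N) (Fin r) ℝ)
    (m w : Fin N → ℝ)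
    (hrank : V.rank = k + 1)
    (hnull : ∀ u : Fin N → ℝ, Zᵀ *ᵥ u = 0 ↔ ∃ α : Fin (k + 1) → ℝ, u = V *ᵥ α)
    (hm : V.vecMul m = Pi.single 0 1)
    (hw_pos : ∀ i, 0 < w i)
    (hw : V.vecMul w = Pi.single 0 1) :
    ∃ y : Fin r → ℝ, ∀ i, 0 ≤ m i + (Z *ᵥ y) i := by
  classical
  set e : (Fin N → ℝ) ≃ₗ[ℝ] EuclideanSpace ℝ (Fin N) :=
    (WithLp.linearEquiv 2 ℝ (Fin N → ℝ)).symm with he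
  have he_apply : ∀ (v : Fin N → ℝ) (i : Fin N), e v i = v i := fun v i => rfl
  have hinner : ∀ a b : Fin N → ℝ, (inner ℝ (e a) (e b) : ℝ) = a ⬝ᵥ b := by
    intro a b
    simp [PiLp.inner_apply, RCLike.inner_apply, dotProduct, he_apply, mul_comm]
  set T : Submodule ℝ (EuclideanSpace ℝ (Fin N)) :=
    Submodule.map e.toLinearMap (LinearMap.range (Matrix.mulVecLin Z)) with hT
  have hmem : e (w - m) ∈ Tᗮᗮ := by
    rw [Submodule.mem_orthogonal]
    intro u hu
    have hZu : Zᵀ *ᵥ (e.symm u) = 0 := by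
      funext j
      have hcol : e (Z *ᵥ Pi.single j 1) ∈ T :=
        ⟨Z *ᵥ Pi.single j 1, ⟨Pi.single j 1, by simp [Matrix.mulVecLin_apply]⟩, rfl⟩
      have h0 := (Submodule.mem_orthogonal _ _).mp hu _ hcol
      have h0' : (inner ℝ (e (e.symm u)) (e (Z *ᵥ Pi.single j 1)) : ℝ) = 0 := by
        rwa [e.apply_symm_apply, real_inner_comm]
      rw [hinner] at h0'
      have hd : (e.symm u) ⬝ᵥ (Z *ᵥ Pi.single j 1) = (Zᵀ *ᵥ (e.symm u)) j := by
        simp [dotProduct, Matrix.mulVec, Matrix.transpose_apply,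
          Pi.single_apply, mul_comm]
      rw [hd] at h0'
      simpa using h0'
    obtain ⟨α, hα⟩ := (hnull _).mp hZu
    have h1 : (inner ℝ u (e (w - m)) : ℝ) = (w - m) ⬝ᵥ (V *ᵥ α) := by
      rw [← e.apply_symm_apply u, hinner, hα, dotProduct_comm]
    rw [h1, dotProduct_mulVec]
    have h2 : (w - m) ᵥ* V = 0 := by
      rw [Matrix.sub_vecMul, hm, hw, sub_self]
    rw [h2, zero_dotProduct]
  rw [Submodule.orthogonal_orthogonal] at hmem
  obtain ⟨x, ⟨y, hy⟩, hx⟩ := hmem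
  refine ⟨y, fun i => ?_⟩
  have hZy : (Z *ᵥ y) i = w i - m i := by
    have h3 : e (Z *ᵥ y) = e (w - m) := by
      rw [← hx, ← hy]; simp [Matrix.mulVecLin_apply]
    have := congrArg (fun v => e.symm v i) h3
    simpa using this
  rw [hZy]
  have := hw_pos i
  linarith
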